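/- arXiv:1409.2042 — 5 statements merged into one kernel-verified Lean document; each statement's English description precedes it below -/
import Mathlib

section
/- If X is a binomial random variable with cl trials and success probability 1/r, and k = l/r, then Pr[X < a] ≤ e^(−ck + (a−1)/r) · ((ck)^a − 1)/(ck − 1), provided ck ≠ 1. -/
/-! Bound each term: `C(n, i) ≤ n ^ i` and `(1 - p) ^ (n - i) ≤ e ^ {-(n - i) p}`, so the `i`-th
binomial probability is at most `e ^ {-np + ip} (np) ^ i ≤ e ^ {-np + (a - 1) p} (np) ^ i` for `i < a`;
summing the geometric series in `np = ck` gives the bound. -/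

open Finset Real

theorem one_sub_pow_le_exp_neg_mul {p : ℝ} (hp : p ≤ 1) (m : ℕ) :
    (1 - p) ^ m ≤ exp (-(m * p)) :=
  calc (1 - p) ^ m ≤ exp (-p) ^ m := pow_le_pow_left₀ (by linarith) (one_sub_le_exp_neg p) m
    _ = exp (-(m * p)) := by rw [← exp_nat_mul]; ring_nf

theorem choose_mul_pow_mul_one_sub_pow_le {p : ℝ} (hp₀ : 0 ≤ p) (hp₁ : p ≤ 1) (n i : ℕ) :
    (n.choose i : ℝ) * p ^ i * (1 - p) ^ (n - i) ≤ exp (-(n * p) + i * p) * (n * p) ^ i := by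
  rcases lt_or_ge n i with hni | hin
  · rw [Nat.choose_eq_zero_of_lt hni, Nat.cast_zero, zero_mul, zero_mul]
    positivity
  have h_choose : (n.choose i : ℝ) * p ^ i ≤ (n * p) ^ i := by
    rw [mul_pow]
    gcongr
    exact_mod_cast Nat.choose_le_pow n i
  have h_exp : (1 - p) ^ (n - i) ≤ exp (-(n * p) + i * p) := by
    refine (one_sub_pow_le_exp_neg_mul hp₁ _).trans_eq ?_
    rw [Nat.cast_sub hin]
    ring_nf
  rw [mul_comm (exp _)]
  exact mul_le_mul h_choose h_exp (pow_nonneg (by linarith) _) (by positivity)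

theorem sum_range_binomial_le {p : ℝ} (hp₀ : 0 ≤ p) (hp₁ : p ≤ 1) (n a : ℕ) :
    ∑ i ∈ range a, (n.choose i : ℝ) * p ^ i * (1 - p) ^ (n - i) ≤
      exp (-(n * p) + (a - 1) * p) * ∑ i ∈ range a, ((n : ℝ) * p) ^ i := by
  rw [mul_sum]
  refine sum_le_sum fun i hi => (choose_mul_pow_mul_one_sub_pow_le hp₀ hp₁ n i).trans ?_
  have hia : (i : ℝ) ≤ a - 1 := by
    have : (i : ℝ) + 1 ≤ a := by exact_mod_cast mem_range.mp hi
    linarith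
  gcongr

theorem binomial_tail_bound_general (c l r a : ℕ) (k : ℝ) (hk : k = (l : ℝ) / (r : ℝ))
    (hck : (c : ℝ) * k ≠ 1) :
    ∑ i ∈ Finset.range a,
        ((c * l).choose i : ℝ) * (1 / (r : ℝ)) ^ i * (1 - 1 / (r : ℝ)) ^ (c * l - i) ≤
      Real.exp (-((c : ℝ) * k) + ((a : ℝ) - 1) / (r : ℝ)) *
        (((c : ℝ) * k) ^ a - 1) / ((c : ℝ) * k - 1) := by
  have hck_eq : (c : ℝ) * k = ((c * l : ℕ) : ℝ) * (1 / r) := by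
    rw [hk]; push_cast; ring
  have hp₁ : 1 / (r : ℝ) ≤ 1 := by
    rcases Nat.eq_zero_or_pos r with rfl | hr
    · simp
    · exact div_le_one_of_le₀ (by exact_mod_cast hr) (Nat.cast_nonneg r)
  rw [mul_div_assoc, ← geom_sum_eq hck, div_eq_mul_one_div ((a : ℝ) - 1), hck_eq]
  exact sum_range_binomial_le (by positivity) hp₁ (c * l) a

/-- If X ~ Binomial(cl, 1/r) and k = l/r, then
    Pr[X < a] ≤ exp(-ck + (a-1)/r) * ((ck)^a - 1)/(ck - 1), provided ck ≠ 1. -/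
theorem binomial_tail_bound (c l r a : ℕ) (hc : 0 < c) (hl : 0 < l) (hr : 1 ≤ r)
    (ha : 1 ≤ a) (k : ℝ) (hk : k = (l : ℝ) / (r : ℝ)) (hck : (c : ℝ) * k ≠ 1) :
    ∑ i ∈ Finset.range a,
        ((c * l).choose i : ℝ) * (1 / (r : ℝ)) ^ i * (1 - 1 / (r : ℝ)) ^ (c * l - i) ≤
      Real.exp (-((c : ℝ) * k) + ((a : ℝ) - 1) / (r : ℝ)) *
        (((c : ℝ) * k) ^ a - 1) / ((c : ℝ) * k - 1) :=
  binomial_tail_bound_general c l r a k hk hck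
end

section
/- For a finite sum of indicator variables Y_v = [X_v ≥ a] over v in R, where each X_v ~ Binomial(cl, 1/r), the expected number of v with X_v ≥ a is at least r·(1 − e^(−ck + (a−1)/r) · ((ck)^a − 1)/(ck − 1)), where k = l/r. -/
open Finset Real

/-- The expected number of right vertices v (out of r) with X_v ≥ a, where each
    X_v ~ Binomial(cl, 1/r), is at least r(1 - e^(-ck+(a-1)/r) ((ck)^a - 1)/(ck - 1)),
    where k = l/r. -/
theorem expected_saturated_lower_bound (c l r a : ℕ) (hc : 0 < c) (hl : 0 < l)
    (hr : 1 ≤ r) (ha : 1 ≤ a) (k : ℝ) (hk : k = (l : ℝ) / (r : ℝ))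
    (hck : (c : ℝ) * k ≠ 1) :
    (r : ℝ) * (1 - Real.exp (-((c : ℝ) * k) + ((a : ℝ) - 1) / (r : ℝ)) *
        (((c : ℝ) * k) ^ a - 1) / ((c : ℝ) * k - 1)) ≤
      ∑ _v ∈ Finset.range r,
        (1 - ∑ i ∈ Finset.range a,
          ((c * l).choose i : ℝ) * (1 / (r : ℝ)) ^ i * (1 - 1 / (r : ℝ)) ^ (c * l - i)) := by
  have hr' : (0 : ℝ) < r := by exact_mod_cast hr
  set x : ℝ := (c : ℝ) * k with hx
  set E : ℝ := -x + ((a : ℝ) - 1) / (r : ℝ) with hE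
  have hxval : x = ((c * l : ℕ) : ℝ) / (r : ℝ) := by
    rw [hx, hk]; push_cast; ring
  have hcl : 0 < c * l := Nat.mul_pos hc hl
  have hx0 : 0 < x := by
    rw [hxval]
    exact div_pos (by exact_mod_cast hcl) hr'
  have hp1 : (1 : ℝ) / r ≤ 1 := by
    rw [div_le_one hr']; exact_mod_cast hr
  have hp0 : (0 : ℝ) ≤ 1 - 1 / r := by linarith
  have key : ∀ i ∈ Finset.range a,
      ((c * l).choose i : ℝ) * (1 / (r : ℝ)) ^ i * (1 - 1 / (r : ℝ)) ^ (c * l - i)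
        ≤ x ^ i * Real.exp E := by
    intro i hi
    have hia : (i : ℝ) ≤ (a : ℝ) - 1 := by
      have h1 : i + 1 ≤ a := Finset.mem_range.mp hi
      have h2 := (Nat.cast_le (α := ℝ)).mpr h1
      push_cast at h2; linarith
    have h1 : ((c * l).choose i : ℝ) * (1 / (r : ℝ)) ^ i ≤ x ^ i := by
      have hch : ((c * l).choose i : ℝ) ≤ ((c * l : ℕ) : ℝ) ^ i := by
        exact_mod_cast Nat.choose_le_pow (c * l) i
      calc ((c * l).choose i : ℝ) * (1 / (r : ℝ)) ^ i
          ≤ ((c * l : ℕ) : ℝ) ^ i * (1 / (r : ℝ)) ^ i := by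
            apply mul_le_mul_of_nonneg_right hch; positivity
        _ = x ^ i := by rw [hxval, div_pow]; ring
    have hm : ((c * l : ℕ) : ℝ) - (i : ℝ) ≤ ((c * l - i : ℕ) : ℝ) := by
      rcases le_total i (c * l) with h | h
      · rw [Nat.cast_sub h]
      · have h0 : c * l - i = 0 := Nat.sub_eq_zero_of_le h
        have h1 : ((c * l : ℕ) : ℝ) ≤ (i : ℝ) := by exact_mod_cast h
        rw [h0, Nat.cast_zero]; linarith
    have h2 : (1 - 1 / (r : ℝ)) ^ (c * l - i) ≤ Real.exp E := by
      have hexp1 : 1 - 1 / (r : ℝ) ≤ Real.exp (-(1 / r)) := by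
        have := Real.add_one_le_exp (-(1 / (r : ℝ)))
        linarith
      calc (1 - 1 / (r : ℝ)) ^ (c * l - i)
          ≤ Real.exp (-(1 / r)) ^ (c * l - i) := pow_le_pow_left₀ hp0 hexp1 _
        _ = Real.exp (((c * l - i : ℕ) : ℝ) * (-(1 / r))) := (Real.exp_nat_mul _ _).symm
        _ ≤ Real.exp E := by
            apply Real.exp_le_exp.mpr
            have hstep : -(((c * l - i : ℕ) : ℝ)) ≤ -(((c * l : ℕ) : ℝ)) + ((a : ℝ) - 1) := by
              linarith
            calc ((c * l - i : ℕ) : ℝ) * (-(1 / r))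
                = (-(((c * l - i : ℕ) : ℝ))) / r := by ring
              _ ≤ (-(((c * l : ℕ) : ℝ)) + ((a : ℝ) - 1)) / r :=
                  (div_le_div_iff_of_pos_right hr').mpr hstep
              _ = E := by rw [hE, hxval]; ring
    exact mul_le_mul h1 h2 (by positivity) (by positivity)
  have hsum : ∑ i ∈ Finset.range a,
      ((c * l).choose i : ℝ) * (1 / (r : ℝ)) ^ i * (1 - 1 / (r : ℝ)) ^ (c * l - i)
        ≤ Real.exp E * (x ^ a - 1) / (x - 1) := by
    calc (∑ i ∈ Finset.range a,
          ((c * l).choose i : ℝ) * (1 / (r : ℝ)) ^ i * (1 - 1 / (r : ℝ)) ^ (c * l - i))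
        ≤ ∑ i ∈ Finset.range a, x ^ i * Real.exp E := Finset.sum_le_sum key
      _ = (∑ i ∈ Finset.range a, x ^ i) * Real.exp E := by rw [Finset.sum_mul]
      _ = (x ^ a - 1) / (x - 1) * Real.exp E := by rw [geom_sum_eq hck]
      _ = Real.exp E * (x ^ a - 1) / (x - 1) := by ring
  rw [Finset.sum_const, Finset.card_range, nsmul_eq_mul]
  apply mul_le_mul_of_nonneg_left _ hr'.le
  linarith
end

section
/- Let X_1, …, X_n be non-positively correlated {0,1}-valued random variables (i.e., for every subset S, Pr[∀i∈S: X_i = 1] ≤ ∏_{i∈S} Pr[X_i = 1]), and X = Σ X_i. Then for any δ ≥ 0, Pr[X ≥ (1+δ)E[X]] ≤ (e^δ/(1+δ)^(1+δ))^{E[X]}. -/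
open MeasureTheory ProbabilityTheory Finset Real

/-! With `t = log (1 + δ)`, a `{0,1}`-valued `x` satisfies `exp (t x) = 1 + δ x`, so
`exp (t X) = ∏ i, (1 + δ X_i)`. Expanding the product, its expectation is
`∑_T δ^|T| Pr[∀ i ∈ T, X_i = 1]`, which non-positive correlation bounds termwise by
`∑_T δ^|T| ∏_{i ∈ T} p_i = ∏ i, (1 + δ p_i) ≤ exp (δ E[X])`, where `p_i = Pr[X_i = 1]`.
Markov's inequality applied to `exp (t X)` then gives the usual Chernoff rate, exactly as for
independent variables. -/

lemma exp_log_one_add_mul_of_eq_zero_or_eq_one {δ x : ℝ} (hδ : -1 < δ) (hx : x = 0 ∨ x = 1) :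
    exp (log (1 + δ) * x) = 1 + δ * x := by
  rcases hx with rfl | rfl
  · simp
  · rw [mul_one, mul_one, exp_log (by linarith)]

lemma prod_one_add_mul_eq_sum_powerset {ι R : Type*} [CommSemiring R] (s : Finset ι) (δ : R)
    (x : ι → R) : ∏ i ∈ s, (1 + δ * x i) = ∑ T ∈ s.powerset, δ ^ T.card * ∏ i ∈ T, x i := by
  simp only [prod_one_add, prod_mul_distrib, prod_const]

lemma exp_rate_mul_eq_chernoff_bound {δ : ℝ} (hδ : -1 < δ) (m : ℝ) :
    exp (-log (1 + δ) * ((1 + δ) * m)) * exp (δ * m) = (exp δ / (1 + δ) ^ (1 + δ)) ^ m := by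
  have h1δ : 0 < 1 + δ := by linarith
  rw [← exp_add, rpow_def_of_pos h1δ, ← exp_sub, rpow_def_of_pos (exp_pos _), log_exp]
  ring_nf

lemma measureReal_ge_le_chernoff_bound {Ω : Type*} [MeasurableSpace Ω] {μ : Measure Ω}
    [IsFiniteMeasure μ] {Y : Ω → ℝ} {δ m : ℝ} (hδ : 0 ≤ δ)
    (hint : Integrable (fun ω => exp (log (1 + δ) * Y ω)) μ)
    (hmgf : mgf Y μ (log (1 + δ)) ≤ exp (δ * m)) :
    μ.real {ω | (1 + δ) * m ≤ Y ω} ≤ (exp δ / (1 + δ) ^ (1 + δ)) ^ m := calc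
  _ ≤ exp (-log (1 + δ) * ((1 + δ) * m)) * mgf Y μ (log (1 + δ)) :=
    measure_ge_le_exp_mul_mgf _ (log_nonneg (by linarith)) hint
  _ ≤ exp (-log (1 + δ) * ((1 + δ) * m)) * exp (δ * m) := by gcongr
  _ = _ := exp_rate_mul_eq_chernoff_bound (by linarith) m

section BooleanFamily

variable {Ω ι : Type*} {X : ι → Ω → ℝ}

lemma prod_eq_indicator_forall_mem_eq_one (hbool : ∀ i ω, X i ω = 0 ∨ X i ω = 1)
    (T : Finset ι) : (fun ω => ∏ i ∈ T, X i ω) = {ω | ∀ i ∈ T, X i ω = 1}.indicator 1 := by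
  funext ω
  by_cases h : ω ∈ {ω | ∀ i ∈ T, X i ω = 1}
  · rw [Set.indicator_of_mem h, prod_eq_one h, Pi.one_apply]
  · rw [Set.indicator_of_notMem h]
    obtain ⟨i, hi, hne⟩ : ∃ i ∈ T, X i ω ≠ 1 := by simpa using h
    exact prod_eq_zero hi ((hbool i ω).resolve_right hne)

variable [MeasurableSpace Ω] {μ : Measure Ω}

lemma measurableSet_forall_mem_eq_one (hmeas : ∀ i, Measurable (X i)) (T : Finset ι) :
    MeasurableSet {ω | ∀ i ∈ T, X i ω = 1} := by
  simp only [Set.ofPred_forall]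
  exact T.measurableSet_biInter fun i _ => hmeas i (measurableSet_singleton 1)

lemma integrable_prod_of_eq_zero_or_eq_one [IsFiniteMeasure μ] (hmeas : ∀ i, Measurable (X i))
    (hbool : ∀ i ω, X i ω = 0 ∨ X i ω = 1) (T : Finset ι) :
    Integrable (fun ω => ∏ i ∈ T, X i ω) μ := by
  rw [prod_eq_indicator_forall_mem_eq_one hbool]
  exact (integrable_const 1).indicator (measurableSet_forall_mem_eq_one hmeas T)

lemma integral_prod_of_eq_zero_or_eq_one (hmeas : ∀ i, Measurable (X i))
    (hbool : ∀ i ω, X i ω = 0 ∨ X i ω = 1) (T : Finset ι) :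
    ∫ ω, ∏ i ∈ T, X i ω ∂μ = μ.real {ω | ∀ i ∈ T, X i ω = 1} := by
  rw [prod_eq_indicator_forall_mem_eq_one hbool]
  exact integral_indicator_one (measurableSet_forall_mem_eq_one hmeas T)

lemma integral_eq_measureReal_eq_one (hmeas : ∀ i, Measurable (X i))
    (hbool : ∀ i ω, X i ω = 0 ∨ X i ω = 1) (i : ι) :
    ∫ ω, X i ω ∂μ = μ.real {ω | X i ω = 1} := by
  simpa using integral_prod_of_eq_zero_or_eq_one (μ := μ) hmeas hbool {i}

variable [IsFiniteMeasure μ] [Fintype ι]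

lemma integrable_prod_one_add_mul (hmeas : ∀ i, Measurable (X i))
    (hbool : ∀ i ω, X i ω = 0 ∨ X i ω = 1) (δ : ℝ) :
    Integrable (fun ω => ∏ i, (1 + δ * X i ω)) μ := by
  simp only [prod_one_add_mul_eq_sum_powerset]
  exact integrable_finsetSum _ fun T _ =>
    (integrable_prod_of_eq_zero_or_eq_one hmeas hbool T).const_mul _

lemma integral_prod_one_add_mul_le (hmeas : ∀ i, Measurable (X i))
    (hbool : ∀ i ω, X i ω = 0 ∨ X i ω = 1)
    (hcorr : ∀ S : Finset ι, μ.real {ω | ∀ i ∈ S, X i ω = 1} ≤ ∏ i ∈ S, μ.real {ω | X i ω = 1})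
    {δ : ℝ} (hδ : 0 ≤ δ) :
    ∫ ω, ∏ i, (1 + δ * X i ω) ∂μ ≤ ∏ i, (1 + δ * μ.real {ω | X i ω = 1}) := by
  simp only [prod_one_add_mul_eq_sum_powerset]
  rw [integral_finsetSum _ fun T _ =>
    (integrable_prod_of_eq_zero_or_eq_one hmeas hbool T).const_mul _]
  refine sum_le_sum fun T _ => ?_
  rw [integral_const_mul, integral_prod_of_eq_zero_or_eq_one hmeas hbool]
  exact mul_le_mul_of_nonneg_left (hcorr T) (pow_nonneg hδ _)

end BooleanFamily

/-- Chernoff bound for non-positively correlated {0,1}-valued random variables: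
    if for every subset S, Pr[∀ i ∈ S, X_i = 1] ≤ ∏_{i∈S} Pr[X_i = 1], then for δ ≥ 0,
    Pr[X ≥ (1+δ)E[X]] ≤ (e^δ/(1+δ)^(1+δ))^{E[X]}, where X = Σ X_i. -/
theorem chernoff_nonpositively_correlated {Ω : Type*} [MeasurableSpace Ω]
    (μ : Measure Ω) [IsProbabilityMeasure μ] (n : ℕ) (X : Fin n → Ω → ℝ)
    (hmeas : ∀ i, Measurable (X i))
    (hbool : ∀ i ω, X i ω = 0 ∨ X i ω = 1)
    (hcorr : ∀ S : Finset (Fin n),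
      (μ {ω | ∀ i ∈ S, X i ω = 1}).toReal ≤ ∏ i ∈ S, (μ {ω | X i ω = 1}).toReal)
    (δ : ℝ) (hδ : 0 ≤ δ) :
    (μ {ω | (1 + δ) * (∑ i, ∫ ω', X i ω' ∂μ) ≤ ∑ i, X i ω}).toReal ≤
      (Real.exp δ / (1 + δ) ^ (1 + δ)) ^ (∑ i, ∫ ω', X i ω' ∂μ) := by
  have hexp : (fun ω => exp (log (1 + δ) * ∑ i, X i ω)) = fun ω => ∏ i, (1 + δ * X i ω) := by
    funext ω
    rw [mul_sum, exp_sum]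
    exact prod_congr rfl fun i _ =>
      exp_log_one_add_mul_of_eq_zero_or_eq_one (by linarith) (hbool i ω)
  refine measureReal_ge_le_chernoff_bound hδ
    (hexp ▸ integrable_prod_one_add_mul hmeas hbool δ) ?_
  calc mgf (fun ω => ∑ i, X i ω) μ (log (1 + δ)) = ∫ ω, ∏ i, (1 + δ * X i ω) ∂μ := by
        rw [mgf, hexp]
    _ ≤ ∏ i, (1 + δ * μ.real {ω | X i ω = 1}) :=
        integral_prod_one_add_mul_le hmeas hbool hcorr hδ
    _ ≤ ∏ i, exp (δ * μ.real {ω | X i ω = 1}) :=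
        prod_le_prod (fun i _ => by positivity) fun i _ =>
          (add_comm _ _).trans_le (add_one_le_exp _)
    _ = exp (δ * ∑ i, ∫ ω, X i ω ∂μ) := by
        simp only [← exp_sum, mul_sum, integral_eq_measureReal_eq_one hmeas hbool]
end

section
/- If p = γ·log(l)/l with γ ≥ 1, and lc = (1+ε)·ra for fixed constants c, a, ε > 0, then (lp)^(a−1) · Σ_{i=0}^{r−1} (1−p)^(l − ia/c) = o(r) as l, r → ∞ subject to lc = (1+ε)ra; consequently the greedy algorithm saturates r − o(r) right vertices in expectation. -/
open Finset Real Filter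

/-!
Write `p = γ log l / l` and `δ = ε / (1 + ε)`. Since `l c = (1 + ε) r a`, every exponent
`l - i a / c` with `i < r` is at least `l - r a / c = δ l`, so by `1 - p ≤ exp (-p)` each
summand is at most `exp (-δ p l) = l ^ (-δ γ) ≤ l ^ (-δ)`. Hence the quantity divided by `r`
is at most `(γ log l) ^ (a - 1) · l ^ (-δ)`, which tends to `0` because powers of `log` are
dominated by every positive power of `l`.
-/

lemma rpow_one_sub_le_exp_neg_mul {p t : ℝ} (hp : p ≤ 1) (ht : 0 ≤ t) :
    (1 - p) ^ t ≤ exp (-(p * t)) :=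
  calc (1 - p) ^ t ≤ exp (-p) ^ t := rpow_le_rpow (by linarith) (one_sub_le_exp_neg p) ht
    _ = exp (-(p * t)) := by rw [← exp_mul, neg_mul]

lemma one_sub_log_div_rpow_le_rpow_neg {x γ δ t : ℝ} (hx : 1 ≤ x) (hγ : 1 ≤ γ)
    (hδ : 0 ≤ δ) (hp : γ * log x / x ≤ 1) (ht : δ * x ≤ t) :
    (1 - γ * log x / x) ^ t ≤ x ^ (-δ) := by
  have hx₀ : 0 < x := by linarith
  have hp₀ : 0 ≤ γ * log x / x := by have := log_nonneg hx; positivity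
  calc (1 - γ * log x / x) ^ t
      ≤ (1 - γ * log x / x) ^ (δ * x) :=
        rpow_le_rpow_of_exponent_ge' (by linarith) (by linarith) (by positivity) ht
    _ ≤ exp (-(γ * log x / x * (δ * x))) := rpow_one_sub_le_exp_neg_mul hp (by positivity)
    _ = x ^ (-(δ * γ)) := by
        rw [rpow_def_of_pos hx₀]
        field_simp
    _ ≤ x ^ (-δ) := rpow_le_rpow_of_exponent_le hx (by nlinarith)

lemma div_one_add_mul_le_sub_mul_div {x ε : ℝ} {a c i r : ℕ} (hε : 1 + ε ≠ 0)
    (hc : 0 < c) (hrel : x * c = (1 + ε) * r * a) (hi : i ≤ r) :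
    ε / (1 + ε) * x ≤ x - i * a / c := by
  have hra : (r : ℝ) * a / c = x / (1 + ε) := by
    field_simp
    linarith
  have hia : (i : ℝ) * a / c ≤ r * a / c := by gcongr
  have hδx : ε / (1 + ε) * x = x - x / (1 + ε) := by field_simp; ring
  linarith

lemma sum_range_div_le {f : ℕ → ℝ} {r : ℕ} {B : ℝ} (hB : 0 ≤ B)
    (hf : ∀ i < r, f i ≤ B) :
    (∑ i ∈ range r, f i) / r ≤ B := by
  rcases r.eq_zero_or_pos with rfl | hr
  · simpa using hB
  rw [div_le_iff₀ (by exact_mod_cast hr)]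
  calc ∑ i ∈ range r, f i ≤ #(range r) • B :=
        sum_le_card_nsmul _ _ _ fun i hi => hf i (mem_range.mp hi)
    _ = B * r := by rw [card_range, nsmul_eq_mul, mul_comm]

lemma tendsto_log_pow_mul_rpow_neg_atTop (k : ℕ) {δ : ℝ} (hδ : 0 < δ) :
    Tendsto (fun x => log x ^ k * x ^ (-δ)) atTop (nhds 0) :=
  (isLittleO_log_rpow_rpow_atTop k hδ).tendsto_div_nhds_zero.congr' <| by
    filter_upwards [eventually_ge_atTop 0] with x hx
    rw [rpow_natCast, rpow_neg hx, div_eq_mul_inv]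

lemma greedy_error_le {x γ ε : ℝ} {a c r : ℕ} (hx : 1 ≤ x) (hγ : 1 ≤ γ) (hε : 0 < ε)
    (hc : 0 < c) (hp : γ * log x / x ≤ 1) (hrel : x * c = (1 + ε) * r * a) :
    ((x * (γ * log x / x)) ^ (a - 1) *
        ∑ i ∈ range r, (1 - γ * log x / x) ^ (x - (i : ℝ) * a / c)) / r ≤
      (γ * log x) ^ (a - 1) * x ^ (-(ε / (1 + ε))) := by
  have hlog : 0 ≤ log x := log_nonneg hx
  rw [mul_div_cancel₀ _ (by positivity), mul_div_assoc]
  gcongr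
  refine sum_range_div_le (by positivity) fun i hi => ?_
  exact one_sub_log_div_rpow_le_rpow_neg hx hγ (by positivity) hp
    (div_one_add_mul_le_sub_mul_div (by positivity) hc hrel hi.le)

lemma greedy_error_nonneg {x γ : ℝ} {a c r : ℕ} (hx : 1 ≤ x) (hγ : 0 ≤ γ)
    (hp : γ * log x / x ≤ 1) :
    0 ≤ ((x * (γ * log x / x)) ^ (a - 1) *
        ∑ i ∈ range r, (1 - γ * log x / x) ^ (x - (i : ℝ) * a / c)) / r := by
  have hlog : 0 ≤ log x := log_nonneg hx
  have hbase : 0 ≤ 1 - γ * log x / x := by linarith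
  have hsum := sum_nonneg fun (i : ℕ) (_ : i ∈ range r) =>
    rpow_nonneg hbase (x - (i : ℝ) * a / c)
  positivity

theorem greedy_error_sublinear_general (a c : ℕ) (hc : 0 < c)
    (γ ε : ℝ) (hγ : 1 ≤ γ) (hε : 0 < ε)
    (l : ℕ → ℝ) (r : ℕ → ℕ)
    (hl : Tendsto l atTop atTop)
    (hrel : ∀ n, l n * (c : ℝ) = (1 + ε) * (r n : ℝ) * (a : ℝ)) :
    Tendsto (fun n =>
      ((l n * (γ * Real.log (l n) / l n)) ^ (a - 1) *
        ∑ i ∈ Finset.range (r n),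
          (1 - γ * Real.log (l n) / l n) ^ (l n - (i : ℝ) * (a : ℝ) / (c : ℝ))) / (r n : ℝ))
      atTop (nhds 0) := by
  have hp : Tendsto (fun n => γ * log (l n) / l n) atTop (nhds 0) := by
    have h := (tendsto_pow_log_div_mul_add_atTop 1 0 1 one_ne_zero).const_mul γ
    simp only [pow_one, one_mul, add_zero, mul_zero, ← mul_div_assoc] at h
    exact h.comp hl
  have hbound : Tendsto (fun n => (γ * log (l n)) ^ (a - 1) * l n ^ (-(ε / (1 + ε))))
      atTop (nhds 0) := by
    have hδ : 0 < ε / (1 + ε) := by positivity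
    have h := ((tendsto_log_pow_mul_rpow_neg_atTop (a - 1) hδ).comp hl).const_mul (γ ^ (a - 1))
    simpa only [mul_zero, Function.comp_def, mul_pow, mul_assoc] using h
  refine squeeze_zero' ?_ ?_ hbound <;>
    filter_upwards [hl.eventually_ge_atTop 1, hp.eventually (eventually_le_nhds one_pos)]
      with n hx hpn
  · exact greedy_error_nonneg hx (by linarith) hpn
  · exact greedy_error_le hx hγ hε hc hpn (hrel n)

/-- If p = γ log l / l with γ ≥ 1 and lc = (1+ε) r a, then
    (lp)^(a-1) Σ_{i=0}^{r-1} (1-p)^(l - ia/c) = o(r) as l, r → ∞ along the relation. -/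
theorem greedy_error_sublinear (a c : ℕ) (ha : 1 ≤ a) (hc : 0 < c)
    (γ ε : ℝ) (hγ : 1 ≤ γ) (hε : 0 < ε)
    (l : ℕ → ℝ) (r : ℕ → ℕ)
    (hl : Tendsto l atTop atTop)
    (hr : Tendsto (fun n => (r n : ℝ)) atTop atTop)
    (hrel : ∀ n, l n * (c : ℝ) = (1 + ε) * (r n : ℝ) * (a : ℝ)) :
    Tendsto (fun n =>
      ((l n * (γ * Real.log (l n) / l n)) ^ (a - 1) *
        ∑ i ∈ Finset.range (r n),
          (1 - γ * Real.log (l n) / l n) ^ (l n - (i : ℝ) * (a : ℝ) / (c : ℝ))) / (r n : ℝ))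
      atTop (nhds 0) :=
  greedy_error_sublinear_general a c hc γ ε hγ hε l r hl hrel
end

section
/- For 0 ≤ i < r, p = γ·log(l)/l with γ ≥ 1, and lc = (1+ε)·ra, one has (1 − p)^(l − ia/c) ≤ l^(−ε/(1+ε)). -/
open Real

/-! Since `1 - p ≤ exp (-p)`, the power `(1 - p) ^ m` is at most `exp (-p m)`. The relation
`l c / a = (1 + ε) r` together with `i < r` gives `i a / c ≤ l / (1 + ε)`, so the exponent
`m = l - i a / c` is at least `ε l / (1 + ε)`; as `p ≥ log l / l`, this makes
`p m ≥ ε log l / (1 + ε)`. -/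

lemma one_sub_rpow_le_exp_neg_mul {p m : ℝ} (hp : p ≤ 1) (hm : 0 ≤ m) :
    (1 - p) ^ m ≤ exp (-(p * m)) :=
  calc (1 - p) ^ m ≤ exp (-p) ^ m := rpow_le_rpow (by linarith) (one_sub_le_exp_neg p) hm
    _ = exp (-(p * m)) := by rw [← exp_mul, neg_mul]

lemma exp_neg_le_rpow_neg {l t x : ℝ} (hl : 0 < l) (h : t * log l ≤ x) :
    exp (-x) ≤ l ^ (-t) := by
  rw [rpow_def_of_pos hl, exp_le_exp]
  linarith

lemma mul_div_le_div_of_mul_div_eq {l s a c r i : ℝ} (ha : 0 < a) (hc : 0 < c) (hs : 0 < s)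
    (hrel : l * c / a = s * r) (hi : i ≤ r) : i * a / c ≤ l / s := by
  have hr : r * a / c = l / s := by
    field_simp at hrel ⊢
    linarith
  calc i * a / c ≤ r * a / c := by gcongr
    _ = l / s := hr

/-- For 0 ≤ i < r, p = γ log l / l with γ ≥ 1, and lc/a = (1+ε) r, one has
    (1 - p)^(l - ia/c) ≤ l^(-ε/(1+ε)). -/
theorem one_sub_p_pow_bound (l γ ε : ℝ) (hl : 2 ≤ l) (hγ : 1 ≤ γ) (hε : 0 < ε)
    (a c r i : ℕ) (ha : 0 < a) (hc : 0 < c) (hir : i < r)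
    (hrel : l * (c : ℝ) / (a : ℝ) = (1 + ε) * (r : ℝ))
    (hp1 : γ * Real.log l / l ≤ 1) :
    (1 - γ * Real.log l / l) ^ (l - (i : ℝ) * (a : ℝ) / (c : ℝ)) ≤
      l ^ (-(ε / (1 + ε))) := by
  have hl0 : 0 < l := by linarith
  have hlog : 0 ≤ log l := log_nonneg (by linarith)
  have hε1 : 0 < 1 + ε := by linarith
  have hp : log l / l ≤ γ * log l / l := by
    gcongr
    exact le_mul_of_one_le_left hlog hγ
  have hm : ε / (1 + ε) * l ≤ l - i * a / c := by
    have hia : (i : ℝ) * a / c ≤ l / (1 + ε) :=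
      mul_div_le_div_of_mul_div_eq (by positivity) (by positivity) hε1 hrel
        (by exact_mod_cast hir.le)
    have hsplit : l - l / (1 + ε) = ε / (1 + ε) * l := by field_simp; ring
    linarith
  have hm0 : 0 ≤ l - i * a / c := (by positivity : 0 ≤ ε / (1 + ε) * l).trans hm
  refine (one_sub_rpow_le_exp_neg_mul hp1 hm0).trans (exp_neg_le_rpow_neg hl0 ?_)
  calc ε / (1 + ε) * log l = log l / l * (ε / (1 + ε) * l) := by field_simp
    _ ≤ γ * log l / l * (l - i * a / c) := by gcongr
end
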